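/- Iterated linear substitution at pairwise distinct variables does not depend on the order of the substitutions: for any simple resource term s, pairwise distinct variables x₁,…,xₙ none of which occurs free in any of the simple poly-terms T₁,…,Tₙ, and any permutation σ of {1,…,n}, ∂_{x_{σ(n)}}(… ∂_{x_{σ(1)}}(s, T_{σ(1)}) …, T_{σ(n)}) = ∂_{x_n}(… ∂_{x_1}(s, T_1) …, T_n) in ℕ⟨Δ⟩ (equivalently, over any semiring of coefficients). -/

import Mathlib

set_option maxHeartbeats 1000000

noncomputable section
open scoped Classical

/-- Simple terms of the resource λ-calculus.  The argument of an application is a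
finite multiset of simple terms (a simple poly-term), represented as a `List`
(read up to permutation).  The syntax is enriched with the constant `c0`. -/
inductive RTerm : Type
  | var : ℕ → RTerm
  | lam : ℕ → RTerm → RTerm
  | app : RTerm → List RTerm → RTerm
  | c0  : RTerm

/-- `deg x s` is the number of (free) occurrences of the variable `x` in `s`. -/
def RTerm.deg (x : ℕ) : RTerm → ℕ
  | .var y => if y = x then 1 else 0
  | .lam y t => if y = x then 0 else t.deg x
  | .app t T => t.deg x + (T.attach.map (fun u => u.1.deg x)).sum
  | .c0 => 0
decreasing_by all_goals (try simp_wf) <;> first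
  | (have := List.sizeOf_lt_of_mem u.2; omega)
  | omega

/-- Simultaneous substitution of (optional) terms for variables. -/
def RTerm.msubst (σ : ℕ → Option RTerm) : RTerm → RTerm
  | .var y => (σ y).getD (.var y)
  | .lam y t => .lam y (t.msubst (fun z => if z = y then none else σ z))
  | .app t T => .app (t.msubst σ) (T.attach.map (fun u => u.1.msubst σ))
  | .c0 => .c0
decreasing_by all_goals (try simp_wf) <;> first
  | (have := List.sizeOf_lt_of_mem u.2; omega)
  | omega

/-- `subst x u t` is `t[u/x]`. -/
def RTerm.subst (x : ℕ) (u : RTerm) (t : RTerm) : RTerm :=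
  t.msubst (fun y => if y = x then some u else none)

/-- Size of a simple term. -/
def RTerm.size : RTerm → ℕ
  | .var _ => 1
  | .lam _ t => t.size + 1
  | .app t T => t.size + (T.attach.map (fun u => u.1.size)).sum + 1
  | .c0 => 1
decreasing_by all_goals (try simp_wf) <;> first
  | (have := List.sizeOf_lt_of_mem u.2; omega)
  | omega

end
noncomputable section
open scoped Classical

-- One-step linear derivative: `rderiv x u s` is the formal sum (with
-- ℕ-coefficients) of all the ways of replacing exactly one occurrence of `x`
-- in `s` by `u`.
mutual
def rderiv (x : ℕ) (u : RTerm) : RTerm → (RTerm →₀ ℕ)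
  | .var y => if y = x then Finsupp.single u 1 else 0
  | .lam y t => if y = x then 0 else (rderiv x u t).mapDomain (RTerm.lam y)
  | .app t T => (rderiv x u t).mapDomain (fun s => RTerm.app s T)
      + (rderivList x u T).mapDomain (RTerm.app t)
  | .c0 => 0

def rderivList (x : ℕ) (u : RTerm) : List RTerm → (List RTerm →₀ ℕ)
  | [] => 0
  | t :: T => (rderiv x u t).mapDomain (· :: T) + (rderivList x u T).mapDomain (t :: ·)
end

/-- Linear extension of `rderiv` to formal sums. -/
def rderivC (x : ℕ) (u : RTerm) (𝒮 : RTerm →₀ ℕ) : RTerm →₀ ℕ :=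
  𝒮.sum (fun t n => n • rderiv x u t)

/-- The linear substitution `∂_x(s, t₁⋯tₙ)`: iterated linear derivative of `s`
at `x` along the elements of `T`, keeping only the terms in which all
occurrences of `x` have been consumed (it is `0` unless `deg x s = T.length`,
assuming the usual convention that `x` is not free in the elements of `T`). -/
def rsub (x : ℕ) (T : List RTerm) (s : RTerm) : RTerm →₀ ℕ :=
  (T.foldl (fun 𝒮 u => rderivC x u 𝒮) (Finsupp.single s 1)).filter
    (fun t => t.deg x = 0)

/-- Linear extension of `∂_x` to formal sums in the first argument. -/
def rsubC (x : ℕ) (𝒮 : RTerm →₀ ℕ) (T : List RTerm) : RTerm →₀ ℕ :=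
  𝒮.sum fun s n => n • rsub x T s

end
noncomputable section
open scoped Classical

/-- One-step β-reduction from a simple term to a formal sum:
the redex rule `⟨λx.s⟩T →β ∂_x(s,T)` closed under the contextual rules. -/
inductive Step : RTerm → (RTerm →₀ ℕ) → Prop
  | redex (x : ℕ) (s : RTerm) (T : List RTerm) :
      Step (.app (.lam x s) T) (rsub x T s)
  | appL {s : RTerm} {𝒮 : RTerm →₀ ℕ} (T : List RTerm) :
      Step s 𝒮 → Step (.app s T) (𝒮.mapDomain (fun v => .app v T))
  | appR {s : RTerm} {𝒮 : RTerm →₀ ℕ} (u : RTerm) (T₁ T₂ : List RTerm) :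
      Step s 𝒮 →
        Step (.app u (T₁ ++ s :: T₂)) (𝒮.mapDomain (fun v => .app u (T₁ ++ v :: T₂)))
  | lam {s : RTerm} {𝒮 : RTerm →₀ ℕ} (x : ℕ) :
      Step s 𝒮 → Step (.lam x s) (𝒮.mapDomain (.lam x))

/-- β-reduction on formal ℕ-linear combinations of simple terms:
`s + u →β 𝒮 + u` whenever `s →β 𝒮`. -/
inductive RStep : (RTerm →₀ ℕ) → (RTerm →₀ ℕ) → Prop
  | mk {s : RTerm} {𝒮 U : RTerm →₀ ℕ} :
      Step s 𝒮 → RStep (Finsupp.single s 1 + U) (𝒮 + U)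

/-- An element of `ℕ⟨Δ⟩` is β-normal when no `→β` step applies to it. -/
def RNormal (a : RTerm →₀ ℕ) : Prop := ∀ b, ¬ RStep a b

end
noncomputable section
open scoped Classical

/-- Iterated linear substitution:
`iterPartial [(x₁,T₁),…,(xₙ,Tₙ)] s = ∂_{xₙ}(… ∂_{x₁}(s,T₁) …, Tₙ)`. -/
def iterPartial (l : List (ℕ × List RTerm)) (s : RTerm) : RTerm →₀ ℕ :=
  l.foldl (fun 𝒮 p => rsubC p.1 𝒮 p.2) (Finsupp.single s 1)

end

/-
The one-step derivatives `rderiv x u` and `rderiv y v`, extended linearly, commute whenever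
`x ≠ y`, `y` is not free in `u` and `x` is not free in `v`: both obey a Leibniz rule for
application and for consing onto a poly-term, and a Leibniz rule transports commutation from
the components to the compound, the two cross terms being the same double sum. Under the same
freshness assumption `rderiv y v` preserves `deg x`, so it also commutes with the filter
`deg x = 0` that ends `∂_x`. Hence `∂_x(·, T)` and `∂_y(·, U)`, each a filter composed with a
product of one-step derivatives, are built from pairwise commuting linear endomorphisms of
`ℕ⟨Δ⟩`, so they commute, and a fold of pairwise commuting maps does not depend on the order of
the list.
-/

namespace Finsupp

variable {R M : Type*} {α β γ : Type*}

section Semiring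

variable [Semiring R]

theorem mapDomain_linearCombination [AddCommMonoid M] [Module R M] (f : α → γ)
    (d : β → α →₀ M) (X : β →₀ R) :
    mapDomain f (linearCombination R d X) =
      linearCombination R (fun b => mapDomain f (d b)) X :=
  apply_linearCombination R (lmapDomain M R f) d X

theorem linearCombination_fun_add [AddCommMonoid M] [Module R M] (v w : α → M) (X : α →₀ R) :
    linearCombination R (fun a => v a + w a) X =
      linearCombination R v X + linearCombination R w X := by
  simp only [linearCombination_apply, smul_add, sum_add]

variable {dα dα₁ dα₂ : α → α →₀ R} {dβ dβ₁ dβ₂ : β → β →₀ R} {dγ dγ₁ dγ₂ : γ → γ →₀ R}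

theorem linearCombination_mapDomain_of_map {f : α → γ}
    (h : ∀ a, dγ (f a) = mapDomain f (dα a)) (X : α →₀ R) :
    linearCombination R dγ (mapDomain f X) = mapDomain f (linearCombination R dα X) := by
  rw [linearCombination_mapDomain, mapDomain_linearCombination]
  exact congrArg (linearCombination R · X) (funext h)

theorem linearCombination_comm_of_map {f : α → γ}
    (h₁ : ∀ a, dγ₁ (f a) = mapDomain f (dα₁ a)) (h₂ : ∀ a, dγ₂ (f a) = mapDomain f (dα₂ a))
    {a : α} (ha : linearCombination R dα₂ (dα₁ a) = linearCombination R dα₁ (dα₂ a)) :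
    linearCombination R dγ₂ (dγ₁ (f a)) = linearCombination R dγ₁ (dγ₂ (f a)) := by
  rw [h₁, h₂, linearCombination_mapDomain_of_map h₂, linearCombination_mapDomain_of_map h₁, ha]

section Leibniz

variable {g : α → β → γ}

theorem linearCombination_mapDomain_left_of_leibniz
    (h : ∀ a b, dγ (g a b) = mapDomain (g · b) (dα a) + mapDomain (g a) (dβ b))
    (A : α →₀ R) (b : β) :
    linearCombination R dγ (mapDomain (g · b) A) =
      mapDomain (g · b) (linearCombination R dα A) +
        linearCombination R (fun a => mapDomain (g a) (dβ b)) A := by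
  rw [linearCombination_mapDomain, mapDomain_linearCombination, ← linearCombination_fun_add]
  exact congrArg (linearCombination R · A) (funext fun a => h a b)

theorem linearCombination_mapDomain_right_of_leibniz
    (h : ∀ a b, dγ (g a b) = mapDomain (g · b) (dα a) + mapDomain (g a) (dβ b))
    (a : α) (B : β →₀ R) :
    linearCombination R dγ (mapDomain (g a) B) =
      linearCombination R (fun b => mapDomain (g · b) (dα a)) B +
        mapDomain (g a) (linearCombination R dβ B) := by
  rw [linearCombination_mapDomain, mapDomain_linearCombination, ← linearCombination_fun_add]
  exact congrArg (linearCombination R · B) (funext fun b => h a b)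

end Leibniz

section Filter

variable [AddCommMonoid M] [Module R M]

variable (R) in
def filterLinearMap (p : α → Prop) [DecidablePred p] :
    Module.End R (α →₀ M) where
  toFun := filter p
  map_add' _ _ := filter_add
  map_smul' _ _ := filter_smul

@[simp] theorem filterLinearMap_apply (p : α → Prop) [DecidablePred p] (S : α →₀ M) :
    filterLinearMap R p S = S.filter p := rfl

theorem commute_filterLinearMap (p q : α → Prop) [DecidablePred p] [DecidablePred q] :
    Commute (filterLinearMap (M := M) R p) (filterLinearMap R q) := by
  refine LinearMap.ext fun S => Finsupp.ext fun a => ?_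
  simp only [Module.End.mul_apply, filterLinearMap_apply, filter_apply]
  split_ifs <;> rfl

theorem commute_filterLinearMap_linearCombination {p : α → Prop} [DecidablePred p]
    {d : α → α →₀ R} (hd : ∀ a, ∀ b ∈ (d a).support, (p b ↔ p a)) :
    Commute (filterLinearMap R p) (linearCombination R d) := by
  refine lhom_ext fun a r => ?_
  simp only [Module.End.mul_apply, filterLinearMap_apply, linearCombination_single, filter_smul]
  by_cases ha : p a
  · rw [filter_single_of_pos _ ha, linearCombination_single, (filter_eq_self_iff _ _).mpr]
    exact fun b hb => (hd a b (mem_support_iff.mpr hb)).mpr ha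
  · rw [filter_single_of_neg _ ha, map_zero, (filter_eq_zero_iff _ _).mpr, smul_zero]
    exact fun b hb => by_contra fun hb' => ha ((hd a b (mem_support_iff.mpr hb')).mp hb)

end Filter

theorem commute_linearCombination_iff {d₁ d₂ : α → α →₀ R} :
    Commute (linearCombination R d₁) (linearCombination R d₂) ↔
      ∀ a, linearCombination R d₁ (d₂ a) = linearCombination R d₂ (d₁ a) := by
  refine ⟨fun h a => ?_, fun h => lhom_ext fun a r => ?_⟩
  · simpa using LinearMap.congr_fun h (single a 1)
  · simp [h a]

end Semiring

section CommSemiring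

variable [CommSemiring R]
  {dα₁ dα₂ : α → α →₀ R} {dβ₁ dβ₂ : β → β →₀ R} {dγ₁ dγ₂ : γ → γ →₀ R}

theorem linearCombination_mapDomain_comm (g : α → β → γ) (A : α →₀ R) (B : β →₀ R) :
    linearCombination R (fun a => mapDomain (g a) B) A =
      linearCombination R (fun b => mapDomain (g · b) A) B := by
  simp only [linearCombination_apply, mapDomain, smul_sum, smul_single, smul_eq_mul]
  rw [sum_comm]
  simp only [mul_comm]

theorem linearCombination_comm_of_leibniz {g : α → β → γ}
    (h₁ : ∀ a b, dγ₁ (g a b) = mapDomain (g · b) (dα₁ a) + mapDomain (g a) (dβ₁ b))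
    (h₂ : ∀ a b, dγ₂ (g a b) = mapDomain (g · b) (dα₂ a) + mapDomain (g a) (dβ₂ b))
    {a : α} {b : β}
    (ha : linearCombination R dα₂ (dα₁ a) = linearCombination R dα₁ (dα₂ a))
    (hb : linearCombination R dβ₂ (dβ₁ b) = linearCombination R dβ₁ (dβ₂ b)) :
    linearCombination R dγ₂ (dγ₁ (g a b)) = linearCombination R dγ₁ (dγ₂ (g a b)) := by
  simp only [h₁, h₂, map_add, linearCombination_mapDomain_left_of_leibniz h₁,
    linearCombination_mapDomain_left_of_leibniz h₂,
    linearCombination_mapDomain_right_of_leibniz h₁,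
    linearCombination_mapDomain_right_of_leibniz h₂, ha, hb,
    linearCombination_mapDomain_comm g (dα₁ a) (dβ₂ b),
    linearCombination_mapDomain_comm g (dα₂ a) (dβ₁ b)]
  abel

end CommSemiring

end Finsupp

namespace RTerm

@[simp] theorem deg_var (x y : ℕ) : (var y).deg x = if y = x then 1 else 0 := by rw [deg]
@[simp] theorem deg_lam (x y : ℕ) (t : RTerm) :
    (lam y t).deg x = if y = x then 0 else t.deg x := by rw [deg]
@[simp] theorem deg_app (x : ℕ) (t : RTerm) (T : List RTerm) :
    (app t T).deg x = t.deg x + (T.map (deg x)).sum := by rw [deg, List.attach_map_val]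

end RTerm

open Finsupp RTerm
open scoped Classical

theorem rderiv_eq_zero_of_deg_eq_zero {x : ℕ} (u : RTerm) {t : RTerm} (ht : t.deg x = 0) :
    rderiv x u t = 0 := by
  induction t using RTerm.rec
    (motive_2 := fun T => (T.map (deg x)).sum = 0 → rderivList x u T = 0) with
  | var y => simp_all [rderiv]
  | lam y t ih => by_cases hy : y = x <;> simp_all [rderiv]
  | app t T iht ihT => simp_all [rderiv]
  | c0 => simp [rderiv]
  | nil => simp [rderivList]
  | cons t T iht ihT => simp_all [rderivList]

theorem deg_eq_of_mem_support_rderiv {x y : ℕ} (hxy : x ≠ y) {v : RTerm} (hv : v.deg x = 0)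
    (t : RTerm) : ∀ t' ∈ (rderiv y v t).support, t'.deg x = t.deg x := by
  induction t using RTerm.rec (motive_2 := fun T => ∀ T' ∈ (rderivList y v T).support,
      (T'.map (deg x)).sum = (T.map (deg x)).sum) with
  | var z =>
    intro t' ht'
    by_cases hz : z = y
    · simp_all [rderiv, Ne.symm hxy]
    · simp [rderiv, hz] at ht'
  | lam z t ih =>
    intro t' ht'
    by_cases hz : z = y
    · simp [rderiv, hz] at ht'
    · simp only [rderiv, hz, if_false] at ht'
      obtain ⟨a, ha, rfl⟩ := Finset.mem_image.mp (mapDomain_support ht')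
      simp [ih a ha]
  | app t T iht ihT =>
    intro t' ht'
    simp only [rderiv] at ht'
    rcases Finset.mem_union.mp (support_add ht') with h | h
    · obtain ⟨a, ha, rfl⟩ := Finset.mem_image.mp (mapDomain_support h)
      simp [iht a ha]
    · obtain ⟨B, hB, rfl⟩ := Finset.mem_image.mp (mapDomain_support h)
      simp [ihT B hB]
  | c0 => simp [rderiv]
  | nil T' hT' => simp [rderivList] at hT'
  | cons t T iht ihT T' hT' =>
    simp only [rderivList] at hT'
    rcases Finset.mem_union.mp (support_add hT') with h | h
    · obtain ⟨a, ha, rfl⟩ := Finset.mem_image.mp (mapDomain_support h)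
      simp [iht a ha]
    · obtain ⟨B, hB, rfl⟩ := Finset.mem_image.mp (mapDomain_support h)
      simp [ihT B hB]

theorem rderiv_comm {x y : ℕ} (hxy : x ≠ y) {u v : RTerm} (hu : u.deg y = 0) (hv : v.deg x = 0)
    (t : RTerm) :
    linearCombination ℕ (rderiv y v) (rderiv x u t) =
      linearCombination ℕ (rderiv x u) (rderiv y v t) := by
  induction t using RTerm.rec (motive_2 := fun T =>
      linearCombination ℕ (rderivList y v) (rderivList x u T) =
        linearCombination ℕ (rderivList x u) (rderivList y v T)) with
  | var z =>
    obtain rfl | hzx := eq_or_ne z x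
    · simp [rderiv, hxy, rderiv_eq_zero_of_deg_eq_zero _ hu]
    obtain rfl | hzy := eq_or_ne z y
    · simp [rderiv, hxy.symm, rderiv_eq_zero_of_deg_eq_zero _ hv]
    simp [rderiv, hzx, hzy]
  | lam z s ih =>
    obtain rfl | hzx := eq_or_ne z x
    · simp [rderiv, hxy, Function.comp_def, ← Pi.zero_def]
    obtain rfl | hzy := eq_or_ne z y
    · simp [rderiv, hxy.symm, Function.comp_def, ← Pi.zero_def]
    exact linearCombination_comm_of_map (fun a => by simp [rderiv, hzx])
      (fun a => by simp [rderiv, hzy]) ih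
  | app t T iht ihT =>
    exact linearCombination_comm_of_leibniz (g := app) (fun a b => by rw [rderiv])
      (fun a b => by rw [rderiv]) iht ihT
  | c0 => simp [rderiv]
  | nil => simp [rderivList]
  | cons t T iht ihT =>
    exact linearCombination_comm_of_leibniz (g := List.cons) (fun a b => by rw [rderivList])
      (fun a b => by rw [rderivList]) iht ihT

theorem commute_linearCombination_rderiv {x y : ℕ} (hxy : x ≠ y) {u v : RTerm}
    (hu : u.deg y = 0) (hv : v.deg x = 0) :
    Commute (linearCombination ℕ (rderiv x u)) (linearCombination ℕ (rderiv y v)) :=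
  commute_linearCombination_iff.mpr fun t => (rderiv_comm hxy hu hv t).symm

theorem commute_filter_linearCombination_rderiv {x y : ℕ} (hxy : x ≠ y) {v : RTerm}
    (hv : v.deg x = 0) :
    Commute (filterLinearMap ℕ fun t => t.deg x = 0) (linearCombination ℕ (rderiv y v)) :=
  commute_filterLinearMap_linearCombination fun t t' ht' => by
    rw [deg_eq_of_mem_support_rderiv hxy hv t t' ht']

noncomputable def rderivIter (x : ℕ) (T : List RTerm) : Module.End ℕ (RTerm →₀ ℕ) :=
  (T.map fun u => linearCombination ℕ (rderiv x u)).reverse.prod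

theorem rderivIter_apply (x : ℕ) (T : List RTerm) (S : RTerm →₀ ℕ) :
    rderivIter x T S = T.foldl (fun 𝒮 u => rderivC x u 𝒮) S := by
  induction T generalizing S with
  | nil => rfl
  | cons u T ih =>
    rw [List.foldl_cons, ← ih]
    simp only [rderivIter, List.map_cons, List.reverse_cons, List.prod_append,
      List.prod_singleton, Module.End.mul_apply]
    rfl

theorem commute_filter_rderivIter {x y : ℕ} (hxy : x ≠ y) {U : List RTerm}
    (hU : ∀ v ∈ U, v.deg x = 0) :
    Commute (filterLinearMap ℕ fun t => t.deg x = 0) (rderivIter y U) :=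
  Commute.list_prod_right _ _ fun _ h => by
    obtain ⟨v, hv, rfl⟩ := List.mem_map.mp (List.mem_reverse.mp h)
    exact commute_filter_linearCombination_rderiv hxy (hU v hv)

theorem commute_rderivIter {x y : ℕ} (hxy : x ≠ y) {T U : List RTerm}
    (hT : ∀ u ∈ T, u.deg y = 0) (hU : ∀ v ∈ U, v.deg x = 0) :
    Commute (rderivIter x T) (rderivIter y U) :=
  Commute.list_prod_left _ _ fun _ hDu => Commute.list_prod_right _ _ fun _ hDv => by
    obtain ⟨u, hu, rfl⟩ := List.mem_map.mp (List.mem_reverse.mp hDu)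
    obtain ⟨v, hv, rfl⟩ := List.mem_map.mp (List.mem_reverse.mp hDv)
    exact commute_linearCombination_rderiv hxy (hT u hu) (hU v hv)

noncomputable def rsubL (x : ℕ) (T : List RTerm) : Module.End ℕ (RTerm →₀ ℕ) :=
  filterLinearMap ℕ (fun t => t.deg x = 0) * rderivIter x T

theorem rsubC_eq_rsubL (x : ℕ) (S : RTerm →₀ ℕ) (T : List RTerm) :
    rsubC x S T = rsubL x T S := by
  suffices h : linearCombination ℕ (rsub x T) = rsubL x T from LinearMap.congr_fun h S
  refine lhom_ext fun s r => ?_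
  rw [linearCombination_single, ← smul_single_one, map_smul]
  simp only [rsub, rsubL, Module.End.mul_apply, filterLinearMap_apply, rderivIter_apply]

theorem commute_rsubL {x y : ℕ} (hxy : x ≠ y) {T U : List RTerm}
    (hT : ∀ u ∈ T, u.deg y = 0) (hU : ∀ v ∈ U, v.deg x = 0) :
    Commute (rsubL x T) (rsubL y U) := by
  have hFF := commute_filterLinearMap (R := ℕ) (M := ℕ) (fun t : RTerm => t.deg x = 0)
    (fun t => t.deg y = 0)
  have hFI := commute_filter_rderivIter hxy hU
  have hIF := (commute_filter_rderivIter hxy.symm hT).symm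
  have hII := commute_rderivIter hxy hT hU
  exact (hFF.mul_right hFI).mul_left (hIF.mul_right hII)

theorem iterPartial_eq_foldl_rsubL (l : List (ℕ × List RTerm)) (s : RTerm) :
    iterPartial l s = l.foldl (fun 𝒮 p => rsubL p.1 p.2 𝒮) (single s 1) := by
  simp only [iterPartial, rsubC_eq_rsubL]

theorem iterPartial_perm {l l' : List (ℕ × List RTerm)} (h : l.Perm l')
    (hcomm : ∀ p ∈ l, ∀ q ∈ l, Commute (rsubL p.1 p.2) (rsubL q.1 q.2)) (s : RTerm) :
    iterPartial l s = iterPartial l' s := by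
  rw [iterPartial_eq_foldl_rsubL, iterPartial_eq_foldl_rsubL]
  exact h.foldl_eq' (fun p hp q hq S => (LinearMap.congr_fun (hcomm p hp q hq) S).symm) _

/-- **Iterated linear substitution at pairwise distinct variables does not
depend on the order of the substitutions**: if the variables `x₁,…,xₙ` are
pairwise distinct and none of them occurs (free) in any of the poly-terms
`T₁,…,Tₙ`, then performing the substitutions in the order prescribed by any
permutation `σ` gives the same result. -/
theorem iterPartial_perm_invariant (n : ℕ) (xs : Fin n → ℕ) (Ts : Fin n → List RTerm)
    (hinj : Function.Injective xs)
    (hfresh : ∀ i j : Fin n, ∀ u ∈ Ts j, u.deg (xs i) = 0)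
    (σ : Equiv.Perm (Fin n)) (s : RTerm) :
    iterPartial ((List.finRange n).map fun i => (xs (σ i), Ts (σ i))) s =
      iterPartial ((List.finRange n).map fun i => (xs i, Ts i)) s := by
  rw [show (fun i => (xs (σ i), Ts (σ i))) = (fun i => (xs i, Ts i)) ∘ σ from rfl,
    ← List.map_map]
  refine iterPartial_perm (σ.map_finRange_perm.map _) ?_ s
  intro _ hp _ hq
  obtain ⟨i, -, rfl⟩ := List.mem_map.mp hp
  obtain ⟨j, -, rfl⟩ := List.mem_map.mp hq
  obtain rfl | hij := eq_or_ne i j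
  · exact Commute.refl _
  · exact commute_rsubL (hinj.ne hij) (hfresh j i) (hfresh i j)
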